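/- arXiv:2511.16960 — 2 statements merged into one kernel-verified Lean document; each statement's English description precedes it below -/
import Mathlib

section
/- Let Σ be symmetric positive definite, μ ∈ ℝⁿ, b > 0, and G(x) = Φ((b - μᵀx)/√(xᵀΣx)) for x ≠ 0, G(0) = 1. Then all partial derivatives of G at 0 exist and equal zero; i.e., for each coordinate direction e_j, lim_{h → 0⁺} (G(h·e_j) - 1)/h = 0 and lim_{h → 0⁺} (G(-h·e_j) - 1)/h = 0. -/
open MeasureTheory Classical

/-!
Along the rays `± t • e_j` with `t > 0`, `G` equals `Φ ((b ∓ μ_j t) / (t √Σ_jj))`, whose argument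
grows like `b / (t √Σ_jj)`. The crude tail bound `1 - Φ z ≤ exp (-z)` for `z ≥ 2` then makes
`|G - 1| / t` exponentially small in `1 / t`.
-/

noncomputable def stdGaussianPdf (t : ℝ) : ℝ :=
  (1 / Real.sqrt (2 * Real.pi)) * Real.exp (-t ^ 2 / 2)

noncomputable def stdNormalCdf (z : ℝ) : ℝ :=
  ∫ t in Set.Iic z, stdGaussianPdf t

/-- G(x) = Φ((b - μᵀx)/√(xᵀΣx)) for x ≠ 0, G(0) = 1. -/
noncomputable def Gfun (n : ℕ) (Sigma : Matrix (Fin n) (Fin n) ℝ) (μ : Fin n → ℝ) (b : ℝ)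
    (x : Fin n → ℝ) : ℝ :=
  if x = 0 then 1 else
    stdNormalCdf ((b - ∑ i, μ i * x i) / Real.sqrt (∑ i, x i * Sigma.mulVec x i))

open Filter Topology Set

lemma stdGaussianPdf_eq_gaussianPDFReal :
    stdGaussianPdf = ProbabilityTheory.gaussianPDFReal 0 1 := by
  ext t
  simp [stdGaussianPdf, ProbabilityTheory.gaussianPDFReal]

lemma integrable_stdGaussianPdf : Integrable stdGaussianPdf := by
  rw [stdGaussianPdf_eq_gaussianPDFReal]
  exact ProbabilityTheory.integrable_gaussianPDFReal 0 1

lemma one_sub_stdNormalCdf (z : ℝ) :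
    1 - stdNormalCdf z = ∫ t in Ioi z, stdGaussianPdf t := by
  have hsplit := intervalIntegral.integral_Iic_add_Ioi (b := z)
    integrable_stdGaussianPdf.integrableOn integrable_stdGaussianPdf.integrableOn
  rw [stdGaussianPdf_eq_gaussianPDFReal,
    ProbabilityTheory.integral_gaussianPDFReal_eq_one 0 one_ne_zero] at hsplit
  rw [stdNormalCdf, ← hsplit, stdGaussianPdf_eq_gaussianPDFReal]
  ring

lemma stdNormalCdf_le_one (z : ℝ) : stdNormalCdf z ≤ 1 := by
  have hz := one_sub_stdNormalCdf z
  have htail : 0 ≤ ∫ t in Ioi z, stdGaussianPdf t :=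
    setIntegral_nonneg measurableSet_Ioi fun t _ ↦ by unfold stdGaussianPdf; positivity
  linarith

lemma stdGaussianPdf_le_exp_neg {t : ℝ} (ht : 2 ≤ t) : stdGaussianPdf t ≤ Real.exp (-t) := by
  have hconst : 1 / Real.sqrt (2 * Real.pi) ≤ 1 := by
    rw [div_le_one (by positivity), Real.one_le_sqrt]
    nlinarith [Real.pi_gt_three]
  calc stdGaussianPdf t ≤ 1 * Real.exp (-t ^ 2 / 2) :=
        mul_le_mul_of_nonneg_right hconst (Real.exp_nonneg _)
    _ ≤ Real.exp (-t) := by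
        rw [one_mul, Real.exp_le_exp]
        nlinarith

lemma one_sub_stdNormalCdf_le_exp_neg {z : ℝ} (hz : 2 ≤ z) :
    1 - stdNormalCdf z ≤ Real.exp (-z) := by
  rw [one_sub_stdNormalCdf, ← integral_exp_neg_Ioi z]
  refine setIntegral_mono_on integrable_stdGaussianPdf.integrableOn ?_ measurableSet_Ioi
    fun t ht ↦ stdGaussianPdf_le_exp_neg (hz.trans (le_of_lt ht))
  simpa using exp_neg_integrableOn_Ioi z one_pos

lemma tendsto_mul_one_sub_stdNormalCdf_affine {a : ℝ} (ha : 0 < a) (m : ℝ) :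
    Tendsto (fun u ↦ u * (1 - stdNormalCdf (a * u + m))) atTop (𝓝 0) := by
  have hbound : Tendsto (fun u ↦ Real.exp (-m) / a * ((a * u) ^ 1 * Real.exp (-(a * u))))
      atTop (𝓝 0) := by
    simpa using ((Real.tendsto_pow_mul_exp_neg_atTop_nhds_zero 1).comp
      (tendsto_id.const_mul_atTop ha)).const_mul (Real.exp (-m) / a)
  have haffine : Tendsto (fun u ↦ a * u + m) atTop atTop :=
    tendsto_atTop_add_const_right _ m (tendsto_id.const_mul_atTop ha)
  refine squeeze_zero' ?_ ?_ hbound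
  · filter_upwards [eventually_ge_atTop 0] with u hu
    exact mul_nonneg hu (sub_nonneg.mpr (stdNormalCdf_le_one _))
  · filter_upwards [eventually_ge_atTop 0, haffine.eventually_ge_atTop 2] with u hu hz
    calc u * (1 - stdNormalCdf (a * u + m)) ≤ u * Real.exp (-(a * u + m)) :=
          mul_le_mul_of_nonneg_left (one_sub_stdNormalCdf_le_exp_neg hz) hu
      _ = _ := by
          rw [neg_add, Real.exp_add]
          field_simp

lemma tendsto_stdNormalCdf_sub_one_div_nhdsGT {b s : ℝ} (hb : 0 < b) (hs : 0 < s) (m : ℝ) :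
    Tendsto (fun h ↦ (stdNormalCdf ((b - m * h) / (h * s)) - 1) / h) (𝓝[>] 0) (𝓝 0) := by
  have hinv := (tendsto_mul_one_sub_stdNormalCdf_affine (div_pos hb hs) (-(m / s))).comp
    tendsto_inv_nhdsGT_zero
  rw [show (𝓝 (0 : ℝ)) = 𝓝 (-0) by rw [neg_zero]]
  refine hinv.neg.congr' ?_
  filter_upwards [self_mem_nhdsWithin] with h (hh : 0 < h)
  rw [Function.comp_apply,
    show b / s * h⁻¹ + -(m / s) = (b - m * h) / (h * s) by field_simp; ring]
  field_simp
  ring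

lemma Gfun_smul_single (n : ℕ) (Sigma : Matrix (Fin n) (Fin n) ℝ) (μ : Fin n → ℝ) (b : ℝ)
    (j : Fin n) {h : ℝ} (hh : h ≠ 0) :
    Gfun n Sigma μ b (h • Pi.single j 1) =
      stdNormalCdf ((b - μ j * h) / (|h| * Real.sqrt (Sigma j j))) := by
  have hx : h • (Pi.single j 1 : Fin n → ℝ) = Pi.single j h := by
    rw [← Pi.single_smul', smul_eq_mul, mul_one]
  have hlin : ∑ i, μ i * (Pi.single j h : Fin n → ℝ) i = μ j * h := dotProduct_single μ h j
  have hquad : ∑ i, (Pi.single j h : Fin n → ℝ) i * Sigma.mulVec (Pi.single j h) i =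
      h ^ 2 * Sigma j j := by
    rw [← dotProduct, single_dotProduct, Matrix.mulVec_single]
    simp only [Pi.smul_apply, Matrix.col_apply, MulOpposite.smul_eq_mul_unop,
      MulOpposite.unop_op]
    ring
  rw [Gfun, hx, if_neg (by simpa using hh), hlin, hquad, Real.sqrt_mul (sq_nonneg h),
    Real.sqrt_sq_eq_abs]

/-- One-sided directional difference quotients of G at 0 vanish in every coordinate
direction, so all partial derivatives of G at 0 exist and equal 0. -/
theorem stmt10 (n : ℕ) (Sigma : Matrix (Fin n) (Fin n) ℝ) (hS : Sigma.PosDef)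
    (μ : Fin n → ℝ) (b : ℝ) (hb : 0 < b) (j : Fin n) :
    Filter.Tendsto (fun h : ℝ =>
        (Gfun n Sigma μ b (h • (Pi.single j 1 : Fin n → ℝ)) - 1) / h)
      (nhdsWithin 0 (Set.Ioi 0)) (nhds 0) ∧
    Filter.Tendsto (fun h : ℝ =>
        (Gfun n Sigma μ b (-(h • (Pi.single j 1 : Fin n → ℝ))) - 1) / h)
      (nhdsWithin 0 (Set.Ioi 0)) (nhds 0) := by
  have hs : 0 < Real.sqrt (Sigma j j) := Real.sqrt_pos.mpr hS.diag_pos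
  constructor
  · refine (tendsto_stdNormalCdf_sub_one_div_nhdsGT hb hs (μ j)).congr' ?_
    filter_upwards [self_mem_nhdsWithin] with h (hh : 0 < h)
    rw [Gfun_smul_single n Sigma μ b j hh.ne', abs_of_pos hh]
  · refine (tendsto_stdNormalCdf_sub_one_div_nhdsGT hb hs (-μ j)).congr' ?_
    filter_upwards [self_mem_nhdsWithin] with h (hh : 0 < h)
    rw [← neg_smul, Gfun_smul_single n Sigma μ b j (neg_ne_zero.mpr hh.ne'), abs_neg,
      abs_of_pos hh, mul_neg, neg_mul]
end

section
/- For every real t > -1, the Gaussian tail integral satisfies 2/(t + √(t² + 4)) ≤ e^{t²/2}·∫_t^∞ e^{-z²/2} dz ≤ 4/(3t + √(t² + 8)). -/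
/-!
Mills' ratio `R t = exp (t ^ 2 / 2) * ∫ z in Ioi t, exp (-z ^ 2 / 2)` solves `R' = t R - 1` and
tends to `0` at infinity. If `h → 0` satisfies `h' ≤ x h - 1` on `[t, ∞)` (resp. `≥`), then
`exp (-x ^ 2 / 2) * h x - ∫ z in Ioi x, exp (-z ^ 2 / 2)` has derivative
`exp (-x ^ 2 / 2) * (h' x - x h x + 1)` of constant sign and limit `0`, so `R t ≤ h t` (resp. `≥`).
For `h = 2 / (x + √(x ^ 2 + 4))` and `h = 4 / (3 x + √(x ^ 2 + 8))` the differential inequalities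
reduce to `x √(x ^ 2 + 4) ≤ x ^ 2 + 2` and `x (x ^ 2 + 6) ≤ √(x ^ 2 + 8) (x ^ 2 + 2)`; the second
bound needs `3 x + √(x ^ 2 + 8) > 0`, i.e. `x > -1`.
-/

open MeasureTheory Set Filter Topology Real

noncomputable def gaussianTail (t : ℝ) : ℝ := ∫ z in Ioi t, exp (-z ^ 2 / 2)

lemma integrable_exp_neg_sq_div_two : Integrable fun z : ℝ => exp (-z ^ 2 / 2) := by
  simpa [neg_div, div_eq_inv_mul] using integrable_exp_neg_mul_sq (b := 1 / 2) (by norm_num)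

lemma hasDerivAt_gaussianTail (t : ℝ) : HasDerivAt gaussianTail (-exp (-t ^ 2 / 2)) t := by
  have hint := integrable_exp_neg_sq_div_two
  have hcont : Continuous fun z : ℝ => exp (-z ^ 2 / 2) := by fun_prop
  have hsplit :
      gaussianTail = fun u => gaussianTail 0 - ∫ z in (0 : ℝ)..u, exp (-z ^ 2 / 2) := by
    funext u
    rw [eq_sub_iff_add_eq', gaussianTail, gaussianTail,
      intervalIntegral.integral_interval_add_Ioi hint.integrableOn hint.integrableOn]
  rw [hsplit]
  exact (intervalIntegral.integral_hasDerivAt_right hint.intervalIntegrable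
    hcont.stronglyMeasurable.stronglyMeasurableAtFilter hcont.continuousAt).const_sub _

lemma tendsto_gaussianTail_atTop : Tendsto gaussianTail atTop (𝓝 0) :=
  tendsto_integral_Ioi_zero tendsto_id

lemma tendsto_exp_neg_sq_div_two_atTop : Tendsto (fun u : ℝ => exp (-u ^ 2 / 2)) atTop (𝓝 0) :=
  tendsto_exp_atBot.comp <|
    (tendsto_neg_atTop_atBot.comp (tendsto_pow_atTop two_ne_zero)).atBot_div_const two_pos

lemma hasDerivAt_exp_neg_sq_div_two (u : ℝ) :
    HasDerivAt (fun x : ℝ => exp (-x ^ 2 / 2)) (exp (-u ^ 2 / 2) * -u) u :=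
  (((hasDerivAt_pow 2 u).neg.div_const 2).congr_deriv (by norm_num; ring)).exp

lemma exp_sq_div_two_mul_exp_neg_sq_div_two (t : ℝ) :
    exp (t ^ 2 / 2) * exp (-t ^ 2 / 2) = 1 := by
  rw [← exp_add, neg_div, add_neg_cancel, exp_zero]

section Comparison

variable {h h' : ℝ → ℝ} {t : ℝ}

lemma hasDerivAt_exp_mul_sub_gaussianTail {u : ℝ} (hh : HasDerivAt h (h' u) u) :
    HasDerivAt (fun x => exp (-x ^ 2 / 2) * h x - gaussianTail x)
      (exp (-u ^ 2 / 2) * (h' u - u * h u + 1)) u := by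
  refine (((hasDerivAt_exp_neg_sq_div_two u).mul hh).sub
    (hasDerivAt_gaussianTail u)).congr_deriv ?_
  ring

lemma tendsto_exp_mul_sub_gaussianTail (hlim : Tendsto h atTop (𝓝 0)) :
    Tendsto (fun x => exp (-x ^ 2 / 2) * h x - gaussianTail x) atTop (𝓝 0) := by
  simpa using (tendsto_exp_neg_sq_div_two_atTop.mul hlim).sub tendsto_gaussianTail_atTop

lemma exp_mul_gaussianTail_le (hderiv : ∀ u ∈ Ici t, HasDerivAt h (h' u) u)
    (hsuper : ∀ u ∈ Ioi t, h' u ≤ u * h u - 1) (hlim : Tendsto h atTop (𝓝 0)) :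
    exp (t ^ 2 / 2) * gaussianTail t ≤ h t := by
  have hanti : AntitoneOn (fun x => exp (-x ^ 2 / 2) * h x - gaussianTail x) (Ici t) := by
    refine antitoneOn_of_hasDerivWithinAt_nonpos (convex_Ici t)
      (f' := fun u => exp (-u ^ 2 / 2) * (h' u - u * h u + 1))
      (fun u hu => (hasDerivAt_exp_mul_sub_gaussianTail (hderiv u hu)).continuousAt
        |>.continuousWithinAt) (fun u hu => ?_) (fun u hu => ?_) <;>
      rw [interior_Ici] at hu
    · exact (hasDerivAt_exp_mul_sub_gaussianTail
        (hderiv u (Ioi_subset_Ici_self hu))).hasDerivWithinAt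
    · exact mul_nonpos_of_nonneg_of_nonpos (exp_pos _).le (by linarith [hsuper u hu])
  have hnonneg : 0 ≤ exp (-t ^ 2 / 2) * h t - gaussianTail t :=
    le_of_tendsto (tendsto_exp_mul_sub_gaussianTail hlim) <| by
      filter_upwards [eventually_ge_atTop t] with x hx using hanti self_mem_Ici hx hx
  calc exp (t ^ 2 / 2) * gaussianTail t ≤ exp (t ^ 2 / 2) * (exp (-t ^ 2 / 2) * h t) := by
        gcongr; linarith
    _ = h t := by rw [← mul_assoc, exp_sq_div_two_mul_exp_neg_sq_div_two, one_mul]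

lemma le_exp_mul_gaussianTail (hderiv : ∀ u ∈ Ici t, HasDerivAt h (h' u) u)
    (hsub : ∀ u ∈ Ioi t, u * h u - 1 ≤ h' u) (hlim : Tendsto h atTop (𝓝 0)) :
    h t ≤ exp (t ^ 2 / 2) * gaussianTail t := by
  have hmono : MonotoneOn (fun x => exp (-x ^ 2 / 2) * h x - gaussianTail x) (Ici t) := by
    refine monotoneOn_of_hasDerivWithinAt_nonneg (convex_Ici t)
      (f' := fun u => exp (-u ^ 2 / 2) * (h' u - u * h u + 1))
      (fun u hu => (hasDerivAt_exp_mul_sub_gaussianTail (hderiv u hu)).continuousAt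
        |>.continuousWithinAt) (fun u hu => ?_) (fun u hu => ?_) <;>
      rw [interior_Ici] at hu
    · exact (hasDerivAt_exp_mul_sub_gaussianTail
        (hderiv u (Ioi_subset_Ici_self hu))).hasDerivWithinAt
    · exact mul_nonneg (exp_pos _).le (by linarith [hsub u hu])
  have hnonpos : exp (-t ^ 2 / 2) * h t - gaussianTail t ≤ 0 :=
    ge_of_tendsto (tendsto_exp_mul_sub_gaussianTail hlim) <| by
      filter_upwards [eventually_ge_atTop t] with x hx using hmono self_mem_Ici hx hx
  calc h t = exp (t ^ 2 / 2) * (exp (-t ^ 2 / 2) * h t) := by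
        rw [← mul_assoc, exp_sq_div_two_mul_exp_neg_sq_div_two, one_mul]
    _ ≤ exp (t ^ 2 / 2) * gaussianTail t := by gcongr; linarith

end Comparison

lemma hasDerivAt_div_mul_add_sqrt {a b u : ℝ} (c : ℝ) (hb : 0 < b)
    (hd : a * u + √(u ^ 2 + b) ≠ 0) :
    HasDerivAt (fun x => c / (a * x + √(x ^ 2 + b)))
      (-(c * (a + u / √(u ^ 2 + b))) / (a * u + √(u ^ 2 + b)) ^ 2) u := by
  have hsqrt : HasDerivAt (fun x => √(x ^ 2 + b)) (u / √(u ^ 2 + b)) u := by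
    refine (((hasDerivAt_pow 2 u).add_const b).sqrt (by positivity)).congr_deriv ?_
    field_simp
    norm_num
  have hden : HasDerivAt (fun x => a * x + √(x ^ 2 + b)) (a + u / √(u ^ 2 + b)) u := by
    exact (((hasDerivAt_id' u).const_mul a).add hsqrt).congr_deriv (by ring)
  exact ((hasDerivAt_const u c).div hden hd).congr_deriv (by ring)

lemma tendsto_div_mul_add_sqrt_atTop {a : ℝ} (ha : 0 < a) (b c : ℝ) :
    Tendsto (fun x => c / (a * x + √(x ^ 2 + b))) atTop (𝓝 0) :=
  tendsto_const_nhds.div_atTop <|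
    tendsto_atTop_mono (fun _ => le_add_of_nonneg_right (sqrt_nonneg _))
      (tendsto_id.const_mul_atTop ha)

lemma mul_sqrt_sq_add_four_le (u : ℝ) : u * √(u ^ 2 + 4) ≤ u ^ 2 + 2 := by
  nlinarith [sq_sqrt (by positivity : (0 : ℝ) ≤ u ^ 2 + 4), sq_nonneg (u - √(u ^ 2 + 4))]

lemma mul_sq_add_six_le_sqrt_mul (u : ℝ) : u * (u ^ 2 + 6) ≤ √(u ^ 2 + 8) * (u ^ 2 + 2) := by
  refine le_of_sq_le_sq ?_ (by positivity)
  rw [mul_pow (√(u ^ 2 + 8)), sq_sqrt (by positivity)]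
  nlinarith

lemma add_sqrt_sq_add_four_pos (u : ℝ) : 0 < u + √(u ^ 2 + 4) := by
  nlinarith [sq_sqrt (by positivity : (0 : ℝ) ≤ u ^ 2 + 4), sqrt_nonneg (u ^ 2 + 4)]

lemma three_mul_add_sqrt_sq_add_eight_pos {u : ℝ} (hu : -1 < u) : 0 < 3 * u + √(u ^ 2 + 8) := by
  nlinarith [sq_sqrt (by positivity : (0 : ℝ) ≤ u ^ 2 + 8), sqrt_nonneg (u ^ 2 + 8)]

lemma sub_one_le_deriv_two_div_add_sqrt (u : ℝ) :
    u * (2 / (u + √(u ^ 2 + 4))) - 1 ≤ -(2 * (1 + u / √(u ^ 2 + 4))) / (u + √(u ^ 2 + 4)) ^ 2 := by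
  have hd := add_sqrt_sq_add_four_pos u
  have hr : 0 < √(u ^ 2 + 4) := by positivity
  field_simp
  nlinarith [mul_nonneg hd.le (sub_nonneg.2 (mul_sqrt_sq_add_four_le u)),
    sq_sqrt (by positivity : (0 : ℝ) ≤ u ^ 2 + 4)]

lemma deriv_four_div_three_mul_add_sqrt_le {u : ℝ} (hu : -1 < u) :
    -(4 * (3 + u / √(u ^ 2 + 8))) / (3 * u + √(u ^ 2 + 8)) ^ 2 ≤
      u * (4 / (3 * u + √(u ^ 2 + 8))) - 1 := by
  have hd := three_mul_add_sqrt_sq_add_eight_pos hu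
  have hr : 0 < √(u ^ 2 + 8) := by positivity
  field_simp
  nlinarith [mul_sq_add_six_le_sqrt_mul u, sq_sqrt (by positivity : (0 : ℝ) ≤ u ^ 2 + 8)]

/-- Szarek–Werner nonsymmetric Gaussian tail inequality. -/
theorem stmt11 (t : ℝ) (ht : -1 < t) :
    2 / (t + Real.sqrt (t ^ 2 + 4)) ≤
        Real.exp (t ^ 2 / 2) * ∫ z in Set.Ioi t, Real.exp (-z ^ 2 / 2) ∧
      Real.exp (t ^ 2 / 2) * (∫ z in Set.Ioi t, Real.exp (-z ^ 2 / 2)) ≤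
        4 / (3 * t + Real.sqrt (t ^ 2 + 8)) := by
  constructor
  · refine le_exp_mul_gaussianTail (h := fun x => 2 / (x + √(x ^ 2 + 4)))
      (fun u _ => ?_) (fun u _ => sub_one_le_deriv_two_div_add_sqrt u) ?_
    · simpa using hasDerivAt_div_mul_add_sqrt (a := 1) 2 (by norm_num)
        (by simpa using (add_sqrt_sq_add_four_pos u).ne')
    · simpa using tendsto_div_mul_add_sqrt_atTop one_pos 4 2
  · exact exp_mul_gaussianTail_le
      (fun u hu => hasDerivAt_div_mul_add_sqrt 4 (by norm_num)
        (three_mul_add_sqrt_sq_add_eight_pos (ht.trans_le hu)).ne')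
      (fun u hu => deriv_four_div_three_mul_add_sqrt_le (ht.trans hu))
      (tendsto_div_mul_add_sqrt_atTop three_pos 8 4)
end
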